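/- arXiv:2303.16746 — 2 statements merged into one kernel-verified Lean document; each statement's English description precedes it below -/
import Mathlib

section
/- In the LQR Riccati recursion, if P_{k+1} is positive semidefinite, R_k is positive definite, and the stage cost matrix [[R_k, S_kᵀ],[S_k, Q_k]] is positive semidefinite, then R_k + B_kᵀP_{k+1}B_k is positive definite and P_k (given by the Riccati update) is positive semidefinite. -/
open Matrix

/-!
Writing `M = R + BᴴPB` and `N = S + BᴴPA`, the block matrix `[[M, N], [Nᴴ, Q + AᴴPA]]` is the stage
cost matrix plus `[B A]ᴴ P [B A]`, hence positive semidefinite. Since `M` is positive definite,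
its Schur complement, which is exactly the Riccati update, is positive semidefinite.
-/

namespace Matrix

variable {l m n 𝕜 : Type*} [Fintype l] [Fintype m] [Fintype n]

theorem PosSemidef.fromBlocks_conjTranspose_mul_mul [CommRing 𝕜] [PartialOrder 𝕜] [StarRing 𝕜]
    {P : Matrix n n 𝕜} (hP : P.PosSemidef) (B : Matrix n m 𝕜) (A : Matrix n l 𝕜) :
    (fromBlocks (Bᴴ * P * B) (Bᴴ * P * A) (Aᴴ * P * B) (Aᴴ * P * A)).PosSemidef := by
  have h := hP.conjTranspose_mul_mul_same (fromCols B A)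
  rwa [conjTranspose_fromCols_eq_fromRows_conjTranspose, fromRows_mul, fromRows_mul_fromCols] at h

theorem PosSemidef.riccati_update [Field 𝕜] [PartialOrder 𝕜] [StarRing 𝕜] [StarOrderedRing 𝕜]
    [DecidableEq m] {P : Matrix n n 𝕜} {R : Matrix m m 𝕜} {S : Matrix m l 𝕜} {Q : Matrix l l 𝕜}
    (hP : P.PosSemidef) (hR : R.PosDef) (hstage : (fromBlocks R S Sᴴ Q).PosSemidef)
    (A : Matrix n l 𝕜) (B : Matrix n m 𝕜) :
    (Q + Aᴴ * P * A
      - (Sᴴ + Aᴴ * P * B) * (R + Bᴴ * P * B)⁻¹ * (S + Bᴴ * P * A)).PosSemidef := by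
  have hM : (R + Bᴴ * P * B).PosDef := hR.add_posSemidef (hP.conjTranspose_mul_mul_same B)
  have hsum := hstage.add (hP.fromBlocks_conjTranspose_mul_mul B A)
  have hN : Sᴴ + Aᴴ * P * B = (S + Bᴴ * P * A)ᴴ := by
    simp only [conjTranspose_add, conjTranspose_mul, conjTranspose_conjTranspose,
      hP.isHermitian.eq, Matrix.mul_assoc]
  rw [fromBlocks_add, hN] at hsum
  rw [hN]
  have := hM.isUnit.invertible
  exact (PosDef.fromBlocks₁₁ _ _ hM).mp hsum

end Matrix

/-- In the LQR Riccati recursion, if `P_{k+1}` is positive semidefinite, `R_k` is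
positive definite and the stage cost matrix `[[R_k, Sₖᵀ],[Sₖ, Q_k]]` is positive
semidefinite, then `R_k + BₖᵀP_{k+1}Bₖ` is positive definite and the Riccati
update `P_k` is positive semidefinite. -/
theorem riccati_update_psd (nx nu : ℕ)
    (R : Matrix (Fin nu) (Fin nu) ℝ) (S : Matrix (Fin nu) (Fin nx) ℝ)
    (Q P A : Matrix (Fin nx) (Fin nx) ℝ) (B : Matrix (Fin nx) (Fin nu) ℝ)
    (hP : P.PosSemidef) (hR : R.PosDef)
    (hstage : (Matrix.fromBlocks R S Sᵀ Q).PosSemidef) :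
    (R + Bᵀ * P * B).PosDef ∧
    (Q + Aᵀ * P * A
      - (Sᵀ + Aᵀ * P * B) * (R + Bᵀ * P * B)⁻¹ * (S + Bᵀ * P * A)).PosSemidef := by
  simp only [← conjTranspose_eq_transpose_of_trivial] at hstage ⊢
  exact ⟨hR.add_posSemidef (hP.conjTranspose_mul_mul_same B), hP.riccati_update hR hstage A B⟩
end

section
/- Exactness of the L1 penalty: let x* be a local minimizer of min f(x) s.t. c(x) ≤ 0 satisfying suitable constraint qualification with Lagrange multipliers λ* ≥ 0. For a convex problem (f convex, c componentwise convex), if ρ > ‖λ*‖_∞ then every global minimizer of the penalized problem min f(x) + ρ Σᵢ max(cᵢ(x), 0) is feasible for the original problem and is a global minimizer of it. -/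
/-!
Stationarity says that the convex Lagrangian `L x = f x + ∑ i, λᵢ cᵢ x` has zero derivative at
`x*`, so `x*` minimizes it, and `L x* = f x*` by complementary slackness. Since `0 ≤ λᵢ < ρ`,
`∑ i, λᵢ cᵢ x ≤ ρ ∑ i, max (cᵢ x) 0`, strictly as soon as some `cᵢ x > 0`. A minimizer `y` of the
penalized objective therefore satisfies `f y + ρ ∑ i, max (cᵢ y) 0 ≤ f x* ≤ f y + ∑ i, λᵢ cᵢ y`,
which forces `y` to be feasible; on the feasible set the penalty vanishes.
-/

open Set

theorem ConvexOn.fun_sum {E ι : Type*} [AddCommMonoid E] [Module ℝ E] {s : Set E}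
    {t : Finset ι} {g : ι → E → ℝ} (hs : Convex ℝ s) (hg : ∀ i ∈ t, ConvexOn ℝ s (g i)) :
    ConvexOn ℝ s fun x => ∑ i ∈ t, g i x := by
  classical
  induction t using Finset.induction_on with
  | empty => simpa using convexOn_const (0 : ℝ) hs
  | insert j t hj ih =>
    simp only [Finset.sum_insert hj]
    exact (hg j (t.mem_insert_self j)).add (ih fun i hi => hg i (Finset.mem_insert_of_mem hi))

theorem ConvexOn.add_le_of_hasFDerivAt {E : Type*} [NormedAddCommGroup E] [NormedSpace ℝ E]
    {s : Set E} {g : E → ℝ} {g' : E →L[ℝ] ℝ} {x y : E}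
    (hg : ConvexOn ℝ s g) (hx : x ∈ s) (hy : y ∈ s) (hd : HasFDerivAt g g' x) :
    g x + g' (y - x) ≤ g y := by
  let ℓ : ℝ →ᵃ[ℝ] E := AffineMap.lineMap x y
  have hd' : HasFDerivAt g g' (ℓ 0) := by simpa [ℓ] using hd
  have hline : HasDerivAt (g ∘ ℓ) (g' (y - x)) 0 :=
    hd'.comp_hasDerivAt (0 : ℝ) AffineMap.hasDerivAt_lineMap
  have hslope := (hg.comp_affineMap ℓ).le_slope_of_hasDerivAt
    (by simpa [ℓ] using hx) (by simpa [ℓ] using hy) one_pos hline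
  simp only [slope_def_field, Function.comp_apply, AffineMap.lineMap_apply_zero,
    AffineMap.lineMap_apply_one, sub_zero, div_one, ℓ] at hslope
  linarith

section KKT

variable {E ι : Type*} [NormedAddCommGroup E] [NormedSpace ℝ E] [Fintype ι]
  {f : E → ℝ} {c : E → ι → ℝ} {xs : E} {lam : ι → ℝ}

theorem le_add_sum_mul_of_kkt (hfconv : ConvexOn ℝ univ f)
    (hcconv : ∀ i, ConvexOn ℝ univ fun x => c x i)
    (hfdiff : DifferentiableAt ℝ f xs) (hcdiff : ∀ i, DifferentiableAt ℝ (fun x => c x i) xs)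
    (hlamnn : ∀ i, 0 ≤ lam i) (hcomp : ∀ i, lam i * c xs i = 0)
    (hstat : fderiv ℝ f xs + ∑ i, lam i • fderiv ℝ (fun x => c x i) xs = 0) (x : E) :
    f xs ≤ f x + ∑ i, lam i * c x i := by
  have hconv : ConvexOn ℝ univ fun x => f x + ∑ i, lam i * c x i :=
    hfconv.add (ConvexOn.fun_sum convex_univ fun i _ => (hcconv i).smul (hlamnn i))
  have hderiv : HasFDerivAt (fun x => f x + ∑ i, lam i * c x i) 0 xs :=
    hstat ▸ hfdiff.hasFDerivAt.add
      (HasFDerivAt.fun_sum fun i _ => (hcdiff i).hasFDerivAt.const_mul (lam i))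
  simpa [hcomp] using hconv.add_le_of_hasFDerivAt (mem_univ xs) (mem_univ x) hderiv

end KKT

theorem mul_le_mul_max_zero {a ρ t : ℝ} (ha : 0 ≤ a) (haρ : a ≤ ρ) : a * t ≤ ρ * max t 0 := by
  rcases le_or_gt t 0 with ht | ht
  · rw [max_eq_right ht, mul_zero]
    exact mul_nonpos_of_nonneg_of_nonpos ha ht
  · rw [max_eq_left ht.le]
    exact mul_le_mul_of_nonneg_right haρ ht.le

theorem sum_mul_lt_mul_sum_max_zero {ι : Type*} [Fintype ι] {a t : ι → ℝ} {ρ : ℝ}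
    (ha : ∀ i, 0 ≤ a i) (haρ : ∀ i, a i < ρ) {j : ι} (hj : 0 < t j) :
    ∑ i, a i * t i < ρ * ∑ i, max (t i) 0 := by
  rw [Finset.mul_sum]
  refine Finset.sum_lt_sum (fun i _ => mul_le_mul_max_zero (ha i) (haρ i).le)
    ⟨j, Finset.mem_univ j, ?_⟩
  rw [max_eq_left hj.le]
  exact mul_lt_mul_of_pos_right (haρ j) hj

/-- Exactness of the L1 penalty for convex problems: if `x*` satisfies the KKT
conditions of `min f(x) s.t. c(x) ≤ 0` with multipliers `λ* ≥ 0`, `f` and each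
`cᵢ` are convex and differentiable, and `ρ > ‖λ*‖_∞`, then every global
minimizer of `f(x) + ρ Σᵢ max(cᵢ(x), 0)` is feasible for the original problem
and is a global minimizer of it. -/
theorem l1_penalty_exactness (n m : ℕ)
    (f : (Fin n → ℝ) → ℝ) (c : (Fin n → ℝ) → Fin m → ℝ)
    (hfconv : ConvexOn ℝ Set.univ f)
    (hcconv : ∀ i, ConvexOn ℝ Set.univ (fun x => c x i))
    (hfdiff : Differentiable ℝ f)
    (hcdiff : ∀ i, Differentiable ℝ (fun x => c x i))
    (xs : Fin n → ℝ) (lam : Fin m → ℝ)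
    (hlamnn : ∀ i, 0 ≤ lam i)
    (hfeas : ∀ i, c xs i ≤ 0)
    (hcomp : ∀ i, lam i * c xs i = 0)
    (hstat : fderiv ℝ f xs + ∑ i, lam i • fderiv ℝ (fun x => c x i) xs = 0)
    (ρ : ℝ) (hρ : ∀ i, lam i < ρ) :
    ∀ y : Fin n → ℝ,
      (∀ x : Fin n → ℝ,
        f y + ρ * ∑ i, max (c y i) 0 ≤ f x + ρ * ∑ i, max (c x i) 0) →
      (∀ i, c y i ≤ 0) ∧
      ∀ x : Fin n → ℝ, (∀ i, c x i ≤ 0) → f y ≤ f x := by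
  have penalty_eq_zero {x : Fin n → ℝ} (hx : ∀ i, c x i ≤ 0) : ∑ i, max (c x i) 0 = 0 :=
    Finset.sum_eq_zero fun i _ => max_eq_right (hx i)
  intro y hy
  have hlag := le_add_sum_mul_of_kkt hfconv hcconv (hfdiff xs) (fun i => hcdiff i xs)
    hlamnn hcomp hstat y
  have hyxs := hy xs
  rw [penalty_eq_zero hfeas, mul_zero, add_zero] at hyxs
  have hyfeas : ∀ i, c y i ≤ 0 := by
    by_contra! ⟨j, hj⟩
    linarith [sum_mul_lt_mul_sum_max_zero hlamnn hρ hj]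
  refine ⟨hyfeas, fun x hx => ?_⟩
  simpa [penalty_eq_zero hyfeas, penalty_eq_zero hx] using hy x
end
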